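/- If τ > 0 satisfies the CFL condition, then ‖(τ/2)M_σ‖₂ < 1 for each σ = 1, 2, 3, where ‖·‖₂ denotes the spectral norm. -/

import Mathlib

open Matrix
open scoped Kronecker

noncomputable section

namespace Kawarada

/-- The spectral norm (largest singular value) of a real matrix:
the operator norm of the induced map between Euclidean spaces. -/
noncomputable def specNorm {m : Type*} [Fintype m] [DecidableEq m]
    (A : Matrix m m ℝ) : ℝ :=
  ‖LinearMap.toContinuousLinearMap (Matrix.toEuclideanLin A)‖

/-- The `N × N` tridiagonal matrix `T` built from mesh steps `h 0, …, h N`.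
Lean row/column index `i : Fin N` corresponds to the paper's index `i + 1`. -/
noncomputable def tridiag (N : ℕ) (h : ℕ → ℝ) : Matrix (Fin N) (Fin N) ℝ :=
  Matrix.of fun i p =>
    if (i : ℕ) = (p : ℕ) then -2 / (h i * h ((i : ℕ) + 1))
    else if (i : ℕ) = (p : ℕ) + 1 then 2 / (h i * (h i + h ((i : ℕ) + 1)))
    else if (p : ℕ) = (i : ℕ) + 1 then 2 / (h ((i : ℕ) + 1) * (h i + h ((i : ℕ) + 1)))
    else 0

/-- `φ_{i,j,k}` for the paper's indices `i,j,k ≥ 1`. -/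
noncomputable def phi (a b c q : ℝ) (h1 h2 h3 : ℕ → ℝ) (i j k : ℕ) : ℝ :=
  (a ^ 2 * (∑ ℓ ∈ Finset.range i, h1 ℓ) ^ 2 +
      b ^ 2 * (∑ ℓ ∈ Finset.range j, h2 ℓ) ^ 2 +
      c ^ 2 * (∑ ℓ ∈ Finset.range k, h3 ℓ) ^ 2) ^ (q / 2)

/-- Index type for the vectorization: `i` (the `Fin N1` component) varies fastest. -/
abbrev Idx (N1 N2 N3 : ℕ) := Fin N3 × Fin N2 × Fin N1

/-- `φ` as a function of the vectorized index. -/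
noncomputable def phiVec (N1 N2 N3 : ℕ) (a b c q : ℝ) (h1 h2 h3 : ℕ → ℝ)
    (p : Idx N1 N2 N3) : ℝ :=
  phi a b c q h1 h2 h3 ((p.2.2 : ℕ) + 1) ((p.2.1 : ℕ) + 1) ((p.1 : ℕ) + 1)

/-- The diagonal matrix `B` with entries `φ_{i,j,k}⁻¹`. -/
noncomputable def Bdiag (N1 N2 N3 : ℕ) (a b c q : ℝ) (h1 h2 h3 : ℕ → ℝ) :
    Matrix (Idx N1 N2 N3) (Idx N1 N2 N3) ℝ :=
  Matrix.diagonal fun p => (phiVec N1 N2 N3 a b c q h1 h2 h3 p)⁻¹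

/-- The matrices `M1, M2, M3`. -/
noncomputable def Mmat (N1 N2 N3 : ℕ) (a b c q : ℝ) (h1 h2 h3 : ℕ → ℝ) :
    Fin 3 → Matrix (Idx N1 N2 N3) (Idx N1 N2 N3) ℝ :=
  ![(a ^ 2)⁻¹ •
      (Bdiag N1 N2 N3 a b c q h1 h2 h3 *
        ((1 : Matrix (Fin N3) (Fin N3) ℝ) ⊗ₖ
          ((1 : Matrix (Fin N2) (Fin N2) ℝ) ⊗ₖ tridiag N1 h1))),
    (b ^ 2)⁻¹ •
      (Bdiag N1 N2 N3 a b c q h1 h2 h3 *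
        ((1 : Matrix (Fin N3) (Fin N3) ℝ) ⊗ₖ
          (tridiag N2 h2 ⊗ₖ (1 : Matrix (Fin N1) (Fin N1) ℝ)))),
    (c ^ 2)⁻¹ •
      (Bdiag N1 N2 N3 a b c q h1 h2 h3 *
        (tridiag N3 h3 ⊗ₖ
          ((1 : Matrix (Fin N2) (Fin N2) ℝ) ⊗ₖ (1 : Matrix (Fin N1) (Fin N1) ℝ))))]

/-- The minimum of the mesh steps `h σ j`, `j = 0, …, N`, in one direction. -/
noncomputable def dirMin (N : ℕ) (h : ℕ → ℝ) : ℝ :=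
  (Finset.range (N + 1)).inf' Finset.nonempty_range_add_one h

/-- The maximum of the mesh steps in one direction. -/
noncomputable def dirMax (N : ℕ) (h : ℕ → ℝ) : ℝ :=
  (Finset.range (N + 1)).sup' Finset.nonempty_range_add_one h

/-- `h = min{h_{σ,j}}`, the global minimal mesh step. -/
noncomputable def meshMin (N1 N2 N3 : ℕ) (h1 h2 h3 : ℕ → ℝ) : ℝ :=
  min (dirMin N1 h1) (min (dirMin N2 h2) (dirMin N3 h3))

/-- `H = max{h_{σ,j}}`, the global maximal mesh step. -/
noncomputable def meshMax (N1 N2 N3 : ℕ) (h1 h2 h3 : ℕ → ℝ) : ℝ :=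
  max (dirMax N1 h1) (max (dirMax N2 h2) (dirMax N3 h3))

/-- `β_min = (h²/2)(a² h_{1,0}² + b² h_{2,0}² + c² h_{3,0}²)^{q/2}`. -/
noncomputable def betaMin (N1 N2 N3 : ℕ) (a b c q : ℝ) (h1 h2 h3 : ℕ → ℝ) : ℝ :=
  meshMin N1 N2 N3 h1 h2 h3 ^ 2 / 2 *
    (a ^ 2 * h1 0 ^ 2 + b ^ 2 * h2 0 ^ 2 + c ^ 2 * h3 0 ^ 2) ^ (q / 2)

/-- The CFL condition `τ/β_min < min{a², b², c²}`. -/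
def CFL (N1 N2 N3 : ℕ) (a b c q : ℝ) (h1 h2 h3 : ℕ → ℝ) (τ : ℝ) : Prop :=
  τ / betaMin N1 N2 N3 a b c q h1 h2 h3 < min (a ^ 2) (min (b ^ 2) (c ^ 2))

/-- `φ_min = min φ_{i,j,k}` (for the grid-sizes `nσ + 2 ≥ 2`). -/
noncomputable def phiMin (n1 n2 n3 : ℕ) (a b c q : ℝ) (h1 h2 h3 : ℕ → ℝ) : ℝ :=
  Finset.univ.inf' Finset.univ_nonempty
    (phiVec (n1 + 2) (n2 + 2) (n3 + 2) a b c q h1 h2 h3)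

/-- The nonlinear source term `g`, acting componentwise: `g(v)_p = f(v_p)/φ_p`. -/
noncomputable def gvec (N1 N2 N3 : ℕ) (a b c q : ℝ) (h1 h2 h3 : ℕ → ℝ) (f : ℝ → ℝ)
    (v : Idx N1 N2 N3 → ℝ) : Idx N1 N2 N3 → ℝ :=
  fun p => f (v p) / phiVec N1 N2 N3 a b c q h1 h2 h3 p

/-- The LOD propagator
`Φ(τ) = ∏_{σ=1}^3 (I − (τ/2)M_σ)⁻¹ (I + (τ/2)M_σ)`. -/
noncomputable def Phi (N1 N2 N3 : ℕ) (a b c q : ℝ) (h1 h2 h3 : ℕ → ℝ) (τ : ℝ) :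
    Matrix (Idx N1 N2 N3) (Idx N1 N2 N3) ℝ :=
  (1 - (τ / 2) • Mmat N1 N2 N3 a b c q h1 h2 h3 0)⁻¹ *
    (1 + (τ / 2) • Mmat N1 N2 N3 a b c q h1 h2 h3 0) *
  ((1 - (τ / 2) • Mmat N1 N2 N3 a b c q h1 h2 h3 1)⁻¹ *
    (1 + (τ / 2) • Mmat N1 N2 N3 a b c q h1 h2 h3 1)) *
  ((1 - (τ / 2) • Mmat N1 N2 N3 a b c q h1 h2 h3 2)⁻¹ *
    (1 + (τ / 2) • Mmat N1 N2 N3 a b c q h1 h2 h3 2))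

theorem isHermitian_symPart {m : Type*} [Fintype m] (A : Matrix m m ℝ) :
    (((2 : ℝ)⁻¹ • (A + Aᵀ))).IsHermitian := by
  show _ᴴ = _
  ext i j
  simp [Matrix.conjTranspose_apply, Matrix.transpose_apply, Matrix.add_apply]
  ring

/-- The logarithmic norm associated with the spectral norm:
`μ(A) = λ_max((A + Aᵀ)/2)`. -/
noncomputable def logNorm {m : Type*} [Fintype m] [DecidableEq m]
    (A : Matrix m m ℝ) : ℝ :=
  ⨆ i, (isHermitian_symPart A).eigenvalues i

/-- The Euclidean (`ℓ²`) norm of a vector. -/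
noncomputable def vecNorm {m : Type*} [Fintype m] (x : m → ℝ) : ℝ :=
  Real.sqrt (∑ i, x i ^ 2)

/-!
Write `M_σ = e_σ⁻² B K_σ` (`e = a, b, c`), where `K_σ` is the Kronecker product of `T_σ` with two
identities, so that `‖(τ/2) M_σ‖₂ ≤ (τ/2) e_σ⁻² ‖B‖₂ ‖K_σ‖₂`. Since `φ` increases with the
indices, `‖B‖₂ = max φ⁻¹ = φ_{1,1,1}⁻¹`. By the Schur test `‖A‖₂² ≤ ‖A‖₁ ‖A‖∞`,
`‖K_σ‖₂ ≤ 4/h²`: every row and column of `T_σ` has absolute sum at most `4/h²`, and Kronecker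
products with identities keep these sums. As `β_min = h² φ_{1,1,1} / 2`, the bound is
`τ / (e_σ² β_min)`, which is `< 1` by the CFL condition.
-/

open scoped Matrix.Norms.L2Operator

theorem specNorm_eq_l2_opNorm {m : Type*} [Fintype m] [DecidableEq m] (A : Matrix m m ℝ) :
    specNorm A = ‖A‖ := rfl

section SchurTest

variable {m n : Type*} [Fintype m] [Fintype n] [DecidableEq n]

theorem l2_opNorm_le_sqrt_of_sum_abs_le (A : Matrix m n ℝ) {R C : ℝ} (hR : 0 ≤ R)
    (hrow : ∀ i, ∑ j, |A i j| ≤ R) (hcol : ∀ j, ∑ i, |A i j| ≤ C) :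
    ‖A‖ ≤ √(R * C) := by
  rw [l2_opNorm_def]
  refine ContinuousLinearMap.opNorm_le_bound _ (Real.sqrt_nonneg _) fun x => ?_
  rw [← Real.sqrt_sq (norm_nonneg x), ← Real.sqrt_mul' _ (sq_nonneg _),
    ← Real.sqrt_sq (norm_nonneg _)]
  refine Real.sqrt_le_sqrt ?_
  simp only [EuclideanSpace.norm_sq_eq, Real.norm_eq_abs, sq_abs, mulVec, dotProduct,
    LinearEquiv.trans_apply, LinearMap.coe_toContinuousLinearMap', toLpLin_apply]
  set v := x.ofLp
  calc ∑ i, (∑ j, A i j * v j) ^ 2 ≤ ∑ i, (∑ j, |A i j|) * ∑ j, |A i j| * v j ^ 2 :=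
        Finset.sum_le_sum fun i _ => Finset.sum_sq_le_sum_mul_sum_of_sq_le_mul _
          (fun j _ => abs_nonneg _) (fun j _ => by positivity)
          (fun j _ => le_of_eq (by rw [mul_pow, ← sq_abs (A i j)]; ring))
    _ ≤ ∑ i, R * ∑ j, |A i j| * v j ^ 2 := by gcongr with i; exact hrow i
    _ = R * ∑ j, (∑ i, |A i j|) * v j ^ 2 := by
        simp only [← Finset.mul_sum, Finset.sum_mul]; rw [Finset.sum_comm]
    _ ≤ R * ∑ j, C * v j ^ 2 := by gcongr with j; exact hcol j
    _ = R * C * ∑ j, v j ^ 2 := by rw [← Finset.mul_sum, mul_assoc]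

/-- `‖A‖∞ ≤ C` and `‖A‖₁ ≤ C`. -/
def AbsLineSumsLE (A : Matrix m n ℝ) (C : ℝ) : Prop :=
  (∀ i, ∑ j, |A i j| ≤ C) ∧ ∀ j, ∑ i, |A i j| ≤ C

theorem AbsLineSumsLE.l2_opNorm_le {A : Matrix m n ℝ} {C : ℝ} (hA : AbsLineSumsLE A C)
    (hC : 0 ≤ C) : ‖A‖ ≤ C := by
  simpa [Real.sqrt_mul_self hC] using l2_opNorm_le_sqrt_of_sum_abs_le A hC hA.1 hA.2

end SchurTest

section Kronecker

variable {l m n p : Type*} [Fintype l] [Fintype m] [Fintype n] [Fintype p]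

theorem absLineSumsLE_one [DecidableEq n] : AbsLineSumsLE (1 : Matrix n n ℝ) 1 := by
  constructor <;> intro i <;> simp [Matrix.one_apply, apply_ite abs]

theorem AbsLineSumsLE.kronecker {A : Matrix l m ℝ} {B : Matrix n p ℝ} {C D : ℝ}
    (hA : AbsLineSumsLE A C) (hB : AbsLineSumsLE B D) (hC : 0 ≤ C) :
    AbsLineSumsLE (A ⊗ₖ B) (C * D) := by
  constructor
  · rintro ⟨i, k⟩
    simp only [kroneckerMap_apply, abs_mul, Fintype.sum_prod_type, ← Finset.mul_sum,
      ← Finset.sum_mul]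
    exact mul_le_mul (hA.1 i) (hB.1 k) (Finset.sum_nonneg fun _ _ => abs_nonneg _) hC
  · rintro ⟨j, k⟩
    simp only [kroneckerMap_apply, abs_mul, Fintype.sum_prod_type, ← Finset.mul_sum,
      ← Finset.sum_mul]
    exact mul_le_mul (hA.2 j) (hB.2 k) (Finset.sum_nonneg fun _ _ => abs_nonneg _) hC

end Kronecker

theorem sum_ite_le_of_subsingleton {ι : Type*} [Fintype ι] {P : ι → Prop} [DecidablePred P]
    (hP : ∀ x y, P x → P y → x = y) {v : ℝ} (hv : 0 ≤ v) :
    ∑ x, (if P x then v else 0) ≤ v := by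
  rw [Finset.sum_ite, Finset.sum_const_zero, add_zero, Finset.sum_const, nsmul_eq_mul]
  refine mul_le_of_le_one_left hv ?_
  exact_mod_cast Finset.card_le_one.mpr fun x hx y hy =>
    hP x y (Finset.mem_filter.mp hx).2 (Finset.mem_filter.mp hy).2

section Tridiag

variable {N : ℕ} {h : ℕ → ℝ} {m : ℝ}

theorem abs_tridiag_le (hm : 0 < m) (hh : ∀ j ≤ N, m ≤ h j) (i p : Fin N) :
    |tridiag N h i p| ≤ (if (i : ℕ) = p then 2 / m ^ 2 else 0)
      + (if (i : ℕ) = p + 1 then 1 / m ^ 2 else 0)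
      + (if (p : ℕ) = i + 1 then 1 / m ^ 2 else 0) := by
  have hi : m ≤ h i := hh _ i.2.le
  have hi' : m ≤ h (i + 1) := hh _ i.2
  have hi0 : 0 < h i := hm.trans_le hi
  have hi0' : 0 < h (i + 1) := hm.trans_le hi'
  have hm2 : m ^ 2 ≤ h i * h (i + 1) := by rw [sq]; gcongr
  simp only [tridiag, of_apply]
  split_ifs <;> try omega
  · rw [abs_div, abs_neg, abs_two, abs_of_pos (by positivity)]
    simp only [add_zero]
    gcongr
  · simp only [zero_add, add_zero]
    rw [abs_of_pos (by positivity), div_le_div_iff₀ (by positivity) (by positivity)]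
    nlinarith
  · simp only [zero_add]
    rw [abs_of_pos (by positivity), div_le_div_iff₀ (by positivity) (by positivity)]
    nlinarith
  · simp

theorem absLineSumsLE_tridiag (hm : 0 < m) (hh : ∀ j ≤ N, m ≤ h j) :
    AbsLineSumsLE (tridiag N h) (4 / m ^ 2) := by
  have h4 : (4 : ℝ) / m ^ 2 = 2 / m ^ 2 + 1 / m ^ 2 + 1 / m ^ 2 := by ring
  constructor <;> intro i <;>
  · refine (Finset.sum_le_sum fun p _ => abs_tridiag_le hm hh _ _).trans ?_
    simp only [Finset.sum_add_distrib, h4]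
    gcongr <;>
      exact sum_ite_le_of_subsingleton (fun x y hx hy => Fin.ext (by omega)) (by positivity)

end Tridiag

theorem dirMin_le {N : ℕ} (h : ℕ → ℝ) {j : ℕ} (hj : j ≤ N) : dirMin N h ≤ h j :=
  Finset.inf'_le _ (Finset.mem_range.mpr (by omega))

theorem dirMin_pos {N : ℕ} {h : ℕ → ℝ} (hpos : ∀ j ≤ N, 0 < h j) : 0 < dirMin N h :=
  (Finset.lt_inf'_iff _).2 fun j hj => hpos j (by simp at hj; omega)

section Weight

variable {a b c q : ℝ} {h1 h2 h3 : ℕ → ℝ}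

theorem phi_mono (hq : 0 ≤ q) {i j k i' j' k' : ℕ} (hi : i ≤ i') (hj : j ≤ j') (hk : k ≤ k')
    (hh1 : ∀ ℓ < i', 0 ≤ h1 ℓ) (hh2 : ∀ ℓ < j', 0 ≤ h2 ℓ) (hh3 : ∀ ℓ < k', 0 ≤ h3 ℓ) :
    phi a b c q h1 h2 h3 i j k ≤ phi a b c q h1 h2 h3 i' j' k' := by
  have partial_sum_mono : ∀ {g : ℕ → ℝ} {n n' : ℕ}, n ≤ n' → (∀ ℓ < n', 0 ≤ g ℓ) →
      0 ≤ ∑ ℓ ∈ Finset.range n, g ℓ ∧ ∑ ℓ ∈ Finset.range n, g ℓ ≤ ∑ ℓ ∈ Finset.range n', g ℓ :=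
    fun hn hg => ⟨Finset.sum_nonneg fun ℓ hℓ => hg ℓ (by simp at hℓ; omega),
      Finset.sum_le_sum_of_subset_of_nonneg (Finset.range_mono hn)
        fun ℓ hℓ _ => hg ℓ (Finset.mem_range.mp hℓ)⟩
  obtain ⟨s1, hs1⟩ := partial_sum_mono hi hh1
  obtain ⟨s2, hs2⟩ := partial_sum_mono hj hh2
  obtain ⟨s3, hs3⟩ := partial_sum_mono hk hh3
  unfold phi
  gcongr

theorem phi_one_one_one_pos (ha : 0 < a) (h10 : 0 < h1 0) :
    0 < phi a b c q h1 h2 h3 1 1 1 := by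
  simp only [phi, Finset.sum_range_one]
  positivity

end Weight

theorem norm_Bdiag_le {N1 N2 N3 : ℕ} {a b c q : ℝ} {h1 h2 h3 : ℕ → ℝ} (ha : 0 < a) (hq : 0 ≤ q)
    (hpos1 : ∀ j ≤ N1, 0 < h1 j) (hpos2 : ∀ j ≤ N2, 0 < h2 j) (hpos3 : ∀ j ≤ N3, 0 < h3 j) :
    ‖Bdiag N1 N2 N3 a b c q h1 h2 h3‖ ≤ (phi a b c q h1 h2 h3 1 1 1)⁻¹ := by
  have hφ : 0 < phi a b c q h1 h2 h3 1 1 1 := phi_one_one_one_pos ha (hpos1 0 (Nat.zero_le _))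
  rw [Bdiag, l2_opNorm_diagonal, pi_norm_le_iff_of_nonneg (inv_nonneg.2 hφ.le)]
  rintro ⟨k, j, i⟩
  have hle : phi a b c q h1 h2 h3 1 1 1 ≤ phiVec N1 N2 N3 a b c q h1 h2 h3 (k, j, i) :=
    phi_mono hq (by omega) (by omega) (by omega)
      (fun ℓ hℓ => (hpos1 ℓ (by simp at hℓ; omega)).le)
      (fun ℓ hℓ => (hpos2 ℓ (by simp at hℓ; omega)).le)
      (fun ℓ hℓ => (hpos3 ℓ (by simp at hℓ; omega)).le)
  rw [Real.norm_eq_abs, abs_inv, abs_of_pos (hφ.trans_le hle)]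
  exact inv_anti₀ hφ hle

theorem l2_opNorm_smul_inv_sq_smul_mul_lt_one {ι : Type*} [Fintype ι] [DecidableEq ι]
    {B K : Matrix ι ι ℝ} {τ e φ h : ℝ} (hτ : 0 < τ) (hφ : 0 < φ) (hh : 0 < h)
    (hB : ‖B‖ ≤ φ⁻¹) (hK : ‖K‖ ≤ 4 / h ^ 2) (hcfl : τ / (h ^ 2 / 2 * φ) < e ^ 2) :
    ‖(τ / 2) • (e ^ 2)⁻¹ • (B * K)‖ < 1 := by
  have he : 0 < e ^ 2 := (div_pos hτ (by positivity)).trans hcfl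
  calc ‖(τ / 2) • (e ^ 2)⁻¹ • (B * K)‖ ≤ τ / 2 * (e ^ 2)⁻¹ * (‖B‖ * ‖K‖) := by
        rw [norm_smul, norm_smul, Real.norm_of_nonneg (by positivity),
          Real.norm_of_nonneg (by positivity), mul_assoc]
        gcongr
        exact l2_opNorm_mul B K
    _ ≤ τ / 2 * (e ^ 2)⁻¹ * (φ⁻¹ * (4 / h ^ 2)) := by gcongr
    _ = τ / (h ^ 2 / 2 * φ) / e ^ 2 := by field_simp; ring
    _ < 1 := (div_lt_one he).2 hcfl

theorem statement1_general (n1 n2 n3 : ℕ) (a b c q : ℝ)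
    (ha : 0 < a) (hq0 : 0 ≤ q)
    (h1 h2 h3 : ℕ → ℝ)
    (hpos1 : ∀ j ≤ n1 + 2, 0 < h1 j)
    (hpos2 : ∀ j ≤ n2 + 2, 0 < h2 j)
    (hpos3 : ∀ j ≤ n3 + 2, 0 < h3 j)
    (τ : ℝ) (hτ : 0 < τ) (hCFL : CFL (n1 + 2) (n2 + 2) (n3 + 2) a b c q h1 h2 h3 τ) :
    ∀ σ : Fin 3, specNorm ((τ / 2) • Mmat (n1 + 2) (n2 + 2) (n3 + 2) a b c q h1 h2 h3 σ) < 1 := by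
  set m := meshMin (n1 + 2) (n2 + 2) (n3 + 2) h1 h2 h3
  have hm : 0 < m := lt_min (dirMin_pos hpos1) (lt_min (dirMin_pos hpos2) (dirMin_pos hpos3))
  have hT1 := absLineSumsLE_tridiag hm fun j hj => (min_le_left _ _).trans (dirMin_le h1 hj)
  have hT2 := absLineSumsLE_tridiag hm fun j hj =>
    ((min_le_right _ _).trans (min_le_left _ _)).trans (dirMin_le h2 hj)
  have hT3 := absLineSumsLE_tridiag hm fun j hj =>
    ((min_le_right _ _).trans (min_le_right _ _)).trans (dirMin_le h3 hj)
  have hC : 0 ≤ 4 / m ^ 2 := by positivity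
  have hB : ‖Bdiag (n1 + 2) (n2 + 2) (n3 + 2) a b c q h1 h2 h3‖ ≤ _ :=
    norm_Bdiag_le ha hq0 hpos1 hpos2 hpos3
  have hφ : 0 < phi a b c q h1 h2 h3 1 1 1 := phi_one_one_one_pos ha (hpos1 0 (Nat.zero_le _))
  have hβ : betaMin (n1 + 2) (n2 + 2) (n3 + 2) a b c q h1 h2 h3
      = m ^ 2 / 2 * phi a b c q h1 h2 h3 1 1 1 := by
    simp [betaMin, phi, m]
  rw [CFL, hβ] at hCFL
  intro σ
  rw [specNorm_eq_l2_opNorm]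
  have hone {n : ℕ} : AbsLineSumsLE (1 : Matrix (Fin n) (Fin n) ℝ) 1 := absLineSumsLE_one
  fin_cases σ
  · refine l2_opNorm_smul_inv_sq_smul_mul_lt_one hτ hφ hm hB (AbsLineSumsLE.l2_opNorm_le ?_ hC)
      (hCFL.trans_le (min_le_left _ _))
    simpa only [one_mul] using hone.kronecker (hone.kronecker hT1 zero_le_one) zero_le_one
  · refine l2_opNorm_smul_inv_sq_smul_mul_lt_one hτ hφ hm hB (AbsLineSumsLE.l2_opNorm_le ?_ hC)
      (hCFL.trans_le ((min_le_right _ _).trans (min_le_left _ _)))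
    simpa only [one_mul, mul_one] using hone.kronecker (hT2.kronecker hone hC) zero_le_one
  · refine l2_opNorm_smul_inv_sq_smul_mul_lt_one hτ hφ hm hB (AbsLineSumsLE.l2_opNorm_le ?_ hC)
      (hCFL.trans_le ((min_le_right _ _).trans (min_le_right _ _)))
    simpa only [mul_one] using hT3.kronecker (hone.kronecker hone zero_le_one) hC

/-- under the CFL condition, `‖(τ/2)M_σ‖₂ < 1` for `σ = 1,2,3`. -/
theorem statement1 (n1 n2 n3 : ℕ) (a b c q : ℝ)
    (ha : 0 < a) (hb : 0 < b) (hc : 0 < c) (hq0 : 0 ≤ q) (hq2 : q ≤ 2)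
    (h1 h2 h3 : ℕ → ℝ)
    (hpos1 : ∀ j ≤ n1 + 2, 0 < h1 j)
    (hpos2 : ∀ j ≤ n2 + 2, 0 < h2 j)
    (hpos3 : ∀ j ≤ n3 + 2, 0 < h3 j)
    (τ : ℝ) (hτ : 0 < τ) (hCFL : CFL (n1 + 2) (n2 + 2) (n3 + 2) a b c q h1 h2 h3 τ) :
    ∀ σ : Fin 3, specNorm ((τ / 2) • Mmat (n1 + 2) (n2 + 2) (n3 + 2) a b c q h1 h2 h3 σ) < 1 :=
  statement1_general n1 n2 n3 a b c q ha hq0 h1 h2 h3 hpos1 hpos2 hpos3 τ hτ hCFL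

end Kawarada
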